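/- Let u be a C^7 function on [0,L] satisfying u(0) = u(L) = D^3u(L) = 0, D^4u(0) = a_{42} D^2u(0), D^5u(0) = a_{51} Du(0), D^4u(L) = b_{42} D^2u(L), D^5u(L) = b_{51} Du(L), with b_{51} < −1/2, b_{42} > 1/2, a_{51} > 1/2, a_{42} < 1/2. Then ∫_0^L (D^3u − D^5u + D^7u)(x) u(x) dx ≥ (−b_{51} − 1/2)(Du(L))^2 + (b_{42} − 1/2)(D^2u(L))^2 + (a_{51} − 1/2)(Du(0))^2 + (1/2 − a_{42})(D^2u(0))^2 + (1/4)(D^3u(0))^2 ≥ 0. -/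

import Mathlib

/-!
Each term of the integrand is an odd derivative times `u`, and `∫ D^(2k+1)u · u` integrates by
parts `k` times into an explicit quadratic boundary form, leaving no integral. Inserting the
boundary conditions, the boundary terms at `L` are exactly the first two terms of the bound, and
those at `0` exceed the remaining three by the square `(Du(0) - D³u(0)/2)²`. Each term of the
bound is nonnegative by the sign conditions on the coefficients.
-/

noncomputable def D (L : ℝ) (u : ℝ → ℝ) (i : ℕ) (x : ℝ) : ℝ :=
  iteratedDerivWithin i u (Set.Icc 0 L) x

open Set Finset

theorem ContDiffOn.hasDerivWithinAt_iteratedDerivWithin {𝕜 F : Type*}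
    [NontriviallyNormedField 𝕜] [NormedAddCommGroup F] [NormedSpace 𝕜 F] {f : 𝕜 → F}
    {s : Set 𝕜} {n : WithTop ℕ∞} {i : ℕ} (hf : ContDiffOn 𝕜 n f s) (hs : UniqueDiffOn 𝕜 s)
    (hi : (i : WithTop ℕ∞) < n) {x : 𝕜} (hx : x ∈ s) :
    HasDerivWithinAt (iteratedDerivWithin i f s) (iteratedDerivWithin (i + 1) f s x) s x := by
  rw [iteratedDerivWithin_succ]
  exact (hf.differentiableOn_iteratedDerivWithin hi hs x hx).hasDerivWithinAt

/-- If `v i` is the `i`-th derivative of `v 0`, this is an antiderivative of `v (2k+1) * v 0`,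
obtained by integrating by parts `k` times. -/
noncomputable def oddBoundaryForm (v : ℕ → ℝ → ℝ) (k : ℕ) (x : ℝ) : ℝ :=
  ∑ j ∈ range k, (-1) ^ j * (v (2 * k - j) x * v j x) + (-1) ^ k * v k x ^ 2 / 2

theorem hasDerivWithinAt_oddBoundaryForm {v : ℕ → ℝ → ℝ} {k : ℕ} {s : Set ℝ} {x : ℝ}
    (hv : ∀ i ≤ 2 * k, HasDerivWithinAt (v i) (v (i + 1) x) s x) :
    HasDerivWithinAt (oddBoundaryForm v k) (v (2 * k + 1) x * v 0 x) s x := by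
  have hsum := HasDerivWithinAt.fun_sum (u := range k) fun j hj =>
    have hj := mem_range.1 hj
    ((hv (2 * k - j) (by omega)).mul (hv j (by omega))).const_mul ((-1 : ℝ) ^ j)
  have hsq := (((hv k (by omega)).pow 2).const_mul ((-1 : ℝ) ^ k)).div_const 2
  refine (hsum.add hsq).congr_deriv ?_
  set t : ℕ → ℝ := fun j => (-1) ^ j * v (2 * k - j + 1) x * v j x
  have htel : ∑ j ∈ range k,
      (-1 : ℝ) ^ j * (v (2 * k - j + 1) x * v j x + v (2 * k - j) x * v (j + 1) x) =
      ∑ j ∈ range k, (t j - t (j + 1)) := by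
    refine sum_congr rfl fun j hj => ?_
    have : 2 * k - (j + 1) + 1 = 2 * k - j := by have := mem_range.1 hj; omega
    simp only [t, this, pow_succ]
    ring
  rw [htel, sum_range_sub']
  simp only [t, show 2 * k - k + 1 = k + 1 by omega, pow_zero, Nat.sub_zero]
  push_cast
  ring

theorem ContDiffOn.intervalIntegrable_iteratedDerivWithin_mul {a b : ℝ} (hab : a < b)
    {u : ℝ → ℝ} {n : WithTop ℕ∞} (hu : ContDiffOn ℝ n u (Icc a b)) {i : ℕ}
    (hi : (i : WithTop ℕ∞) ≤ n) :
    IntervalIntegrable (fun x => iteratedDerivWithin i u (Icc a b) x * u x)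
      MeasureTheory.volume a b := by
  refine ContinuousOn.intervalIntegrable ?_
  rw [uIcc_of_le hab.le]
  exact (hu.continuousOn_iteratedDerivWithin hi (uniqueDiffOn_Icc hab)).mul hu.continuousOn

theorem integral_iteratedDerivWithin_odd_mul {a b : ℝ} (hab : a < b) {u : ℝ → ℝ}
    {n : WithTop ℕ∞} (hu : ContDiffOn ℝ n u (Icc a b)) {k : ℕ}
    (hk : ((2 * k + 1 : ℕ) : WithTop ℕ∞) ≤ n) :
    ∫ x in a..b, iteratedDerivWithin (2 * k + 1) u (Icc a b) x * u x =
      oddBoundaryForm (fun i => iteratedDerivWithin i u (Icc a b)) k b -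
        oddBoundaryForm (fun i => iteratedDerivWithin i u (Icc a b)) k a := by
  have hderiv : ∀ x ∈ Icc a b, HasDerivWithinAt
      (oddBoundaryForm (fun i => iteratedDerivWithin i u (Icc a b)) k)
      (iteratedDerivWithin (2 * k + 1) u (Icc a b) x * u x) (Icc a b) x := fun x hx => by
    simpa only [iteratedDerivWithin_zero] using hasDerivWithinAt_oddBoundaryForm fun i hi =>
      hu.hasDerivWithinAt_iteratedDerivWithin (uniqueDiffOn_Icc hab)
        ((Nat.cast_lt.2 (by omega : i < 2 * k + 1)).trans_le hk) hx
  refine intervalIntegral.integral_eq_sub_of_hasDeriv_right_of_le hab.le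
    (fun x hx => (hderiv x hx).continuousWithinAt) (fun x hx => ?_)
    (hu.intervalIntegrable_iteratedDerivWithin_mul hab hk)
  exact ((hderiv x (Ioo_subset_Icc_self hx)).hasDerivAt (Icc_mem_nhds hx.1 hx.2)).hasDerivWithinAt

theorem stmt_13 (L : ℝ) (hL : 0 < L) (a42 a51 b42 b51 : ℝ)
    (ha42 : a42 < 1 / 2) (ha51 : 1 / 2 < a51) (hb42 : 1 / 2 < b42) (hb51 : b51 < -(1 / 2))
    (u : ℝ → ℝ) (hu : ContDiffOn ℝ 7 u (Set.Icc 0 L))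
    (h0 : u 0 = 0) (hLv : u L = 0) (h3L : D L u 3 L = 0)
    (h40 : D L u 4 0 = a42 * D L u 2 0) (h50 : D L u 5 0 = a51 * D L u 1 0)
    (h4L : D L u 4 L = b42 * D L u 2 L) (h5L : D L u 5 L = b51 * D L u 1 L) :
    (∫ x in (0:ℝ)..L, (D L u 3 x - D L u 5 x + D L u 7 x) * u x) ≥
      (-b51 - 1 / 2) * (D L u 1 L) ^ 2 + (b42 - 1 / 2) * (D L u 2 L) ^ 2 +
        (a51 - 1 / 2) * (D L u 1 0) ^ 2 + (1 / 2 - a42) * (D L u 2 0) ^ 2 +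
        (1 / 4) * (D L u 3 0) ^ 2 ∧
    (-b51 - 1 / 2) * (D L u 1 L) ^ 2 + (b42 - 1 / 2) * (D L u 2 L) ^ 2 +
        (a51 - 1 / 2) * (D L u 1 0) ^ 2 + (1 / 2 - a42) * (D L u 2 0) ^ 2 +
        (1 / 4) * (D L u 3 0) ^ 2 ≥ 0 := by
  have hk : ∀ k ≤ 3, ((2 * k + 1 : ℕ) : WithTop ℕ∞) ≤ 7 := fun k hk3 => by
    exact_mod_cast (by omega : 2 * k + 1 ≤ 7)
  have hint : ∀ k ≤ 3, IntervalIntegrable (fun x => D L u (2 * k + 1) x * u x)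
      MeasureTheory.volume 0 L := fun k hk3 =>
    hu.intervalIntegrable_iteratedDerivWithin_mul hL (hk k hk3)
  have hibp : ∀ k ≤ 3, ∫ x in (0:ℝ)..L, D L u (2 * k + 1) x * u x =
      oddBoundaryForm (D L u) k L - oddBoundaryForm (D L u) k 0 := fun k hk3 =>
    integral_iteratedDerivWithin_odd_mul hL hu (hk k hk3)
  have hD0 : D L u 0 = u := iteratedDerivWithin_zero
  have key : ∫ x in (0:ℝ)..L, (D L u 3 x - D L u 5 x + D L u 7 x) * u x =
      (-b51 - 1 / 2) * (D L u 1 L) ^ 2 + (b42 - 1 / 2) * (D L u 2 L) ^ 2 +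
        (a51 - 1 / 2) * (D L u 1 0) ^ 2 + (1 / 2 - a42) * (D L u 2 0) ^ 2 +
        (1 / 4) * (D L u 3 0) ^ 2 + (D L u 1 0 - D L u 3 0 / 2) ^ 2 := by
    have i3 := hint 1 (by norm_num)
    have i5 := hint 2 (by norm_num)
    have i7 := hint 3 (by norm_num)
    simp only [sub_mul, add_mul]
    rw [intervalIntegral.integral_add (i3.sub i5) i7, intervalIntegral.integral_sub i3 i5,
      hibp 1 (by norm_num), hibp 2 (by norm_num), hibp 3 (by norm_num)]
    simp only [oddBoundaryForm, sum_range_succ, sum_range_zero, Nat.reduceMul, Nat.reduceSub, hD0,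
      h0, hLv, h3L, h40, h50, h4L, h5L]
    ring
  refine ⟨key ▸ le_add_of_nonneg_right (sq_nonneg _), ?_⟩
  refine add_nonneg (add_nonneg (add_nonneg (add_nonneg ?_ ?_) ?_) ?_) ?_ <;>
    exact mul_nonneg (by linarith) (sq_nonneg _)
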